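/- Let F = ⟨A, R, W, S⟩ be a semiring-based weighted argumentation framework over an absorptive c-semiring S, let Z ⊆ A be w-conflict-free, and fix z ∈ Z. Define the reduced WAF F' on A' = {z} ∪ (A \ Z) by W'(z, j) = ⊗_{i ∈ Z} W(i, j) and W'(j, z) = ⊗_{i ∈ Z} W(j, i) for j ∈ A \ Z, W'(j, j') = W(j, j') for j, j' ∈ A \ Z, and W'(z, z) = ⊤. Then Z is a w-preferred extension of F if and only if {z} is a w-preferred extension of F'. -/

import Mathlib

/-! In an absorptive c-semiring `⊤ = 1` is the top element, so a product equals `⊤` only if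
each factor does. Hence nothing inside a conflict-free set `B` attacks it, and admissibility of
`B` only asks `W(B, a) ≤ W(a, B)` for each outside attacker `a`. For `D` disjoint from `Z`,
contracting `Z` into `z` leaves `W(Z ∪ D, a)`, `W(a, Z ∪ D)` and, as `W(Z, Z) = ⊤`, also
`W(Z ∪ D, Z ∪ D)` unchanged, so `Z ∪ D` is admissible in `F` iff `{z} ∪ D` is in `F'`.
Maximality of `Z`, resp. `{z}`, means that no nonempty such `D` exists. -/

open Finset

variable {A : Type*} [Fintype A] [DecidableEq A] {S : Type*} [CommSemiring S]

/-- The order induced by the idempotent addition of a c-semiring: `a ≤ₛ b` iff `a + b = b`. -/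
def sLE (a b : S) : Prop := a + b = b

/-- The attack weight `W(B, D)` from a set of arguments `B` to a set `D`:
the semiring product of all pairwise weights. -/
def Wsets (W : A → A → S) (B D : Finset A) : S := ∏ b ∈ B, ∏ d ∈ D, W b d

/-- `B` is w-conflict-free iff `W(B, B) = ⊤` (here `⊤` is the multiplicative unit `1`). -/
def wConflictFree (W : A → A → S) (B : Finset A) : Prop := Wsets W B B = 1

/-- Within the framework whose set of arguments is `U`, the set `B` w-defends `b`:
for every attacker `a ∈ U` of `b` (i.e. `W a b ≠ ⊤`), `W(a, B ∪ {b}) ≥ₛ W(B, a)`. -/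
def wDefendsIn (W : A → A → S) (U B : Finset A) (b : A) : Prop :=
  ∀ a ∈ U, W a b ≠ 1 → sLE (Wsets W B {a}) (Wsets W {a} (insert b B))

/-- `B` is w-admissible in the framework with argument set `U`:
`B ⊆ U`, `B` is w-conflict-free, and `B` w-defends each of its members. -/
def wAdmissibleIn (W : A → A → S) (U B : Finset A) : Prop :=
  B ⊆ U ∧ wConflictFree W B ∧ ∀ b ∈ B, wDefendsIn W U B b

/-- `B` is a w-stable extension: w-admissible and every argument of `U` outside `B`
is attacked by some member of `B`. -/
def wStableIn (W : A → A → S) (U B : Finset A) : Prop :=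
  wAdmissibleIn W U B ∧ ∀ a ∈ U, a ∉ B → ∃ b ∈ B, W b a ≠ 1

/-- `B` is a w-complete extension: w-admissible and it contains every argument `b`
such that `B ∪ {b}` is w-admissible. -/
def wCompleteIn (W : A → A → S) (U B : Finset A) : Prop :=
  wAdmissibleIn W U B ∧ ∀ b ∈ U, wAdmissibleIn W U (insert b B) → b ∈ B

/-- `B` is a w-preferred extension: a ⊆-maximal w-admissible subset. -/
def wPreferredIn (W : A → A → S) (U B : Finset A) : Prop :=
  wAdmissibleIn W U B ∧ ∀ C : Finset A, wAdmissibleIn W U C → B ⊆ C → C = B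

theorem eq_one_of_mul_eq_one_of_absorptive (habs : ∀ s t : S, s + s * t = s) {x y : S}
    (h : x * y = 1) : x = 1 := by
  have hx : x + 1 = x := by simpa [h] using habs x y
  have h1 : 1 + x = 1 := by simpa using habs 1 x
  calc x = x + 1 := hx.symm
    _ = 1 := by rw [add_comm, h1]

theorem Finset.prod_eq_one_iff_of_absorptive {ι : Type*} (habs : ∀ s t : S, s + s * t = s)
    {s : Finset ι} {f : ι → S} : ∏ i ∈ s, f i = 1 ↔ ∀ i ∈ s, f i = 1 := by
  classical
  refine ⟨fun h i hi => ?_, prod_eq_one⟩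
  exact eq_one_of_mul_eq_one_of_absorptive habs ((mul_prod_erase s f hi).trans h)

omit [Fintype A] [DecidableEq A] in
theorem Wsets_eq_one_iff (habs : ∀ s t : S, s + s * t = s) {W : A → A → S} {B D : Finset A} :
    Wsets W B D = 1 ↔ ∀ b ∈ B, ∀ d ∈ D, W b d = 1 := by
  simp only [Wsets, prod_eq_one_iff_of_absorptive habs]

omit [Fintype A] in
theorem Wsets_union_left (W : A → A → S) {B C : Finset A} (h : Disjoint B C) (D : Finset A) :
    Wsets W (B ∪ C) D = Wsets W B D * Wsets W C D :=
  prod_union h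

omit [Fintype A] in
theorem Wsets_union_right (W : A → A → S) (B : Finset A) {C D : Finset A} (h : Disjoint C D) :
    Wsets W B (C ∪ D) = Wsets W B C * Wsets W B D := by
  simp only [Wsets, prod_union h, prod_mul_distrib]

omit [Fintype A] [DecidableEq A] in
theorem Wsets_singleton_singleton (W : A → A → S) (a b : A) : Wsets W {a} {b} = W a b := by
  simp [Wsets]

omit [Fintype A] in
theorem wAdmissibleIn_iff (habs : ∀ s t : S, s + s * t = s) {W : A → A → S} {U B : Finset A} :
    wAdmissibleIn W U B ↔ B ⊆ U ∧ wConflictFree W B ∧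
      ∀ a ∈ U \ B, Wsets W {a} B ≠ 1 → sLE (Wsets W B {a}) (Wsets W {a} B) := by
  refine and_congr_right fun _ => and_congr_right fun hcf => ⟨?_, ?_⟩
  · intro hdef a ha hatt
    obtain ⟨b, hb, hab⟩ : ∃ b ∈ B, W a b ≠ 1 := by
      simpa [Wsets_eq_one_iff habs] using hatt
    simpa [insert_eq_of_mem hb] using hdef b hb a (sdiff_subset ha) hab
  · intro hdef b hb a ha hab
    have haB : a ∉ B := fun haB => hab ((Wsets_eq_one_iff habs).1 hcf a haB b hb)
    have hatt : Wsets W {a} B ≠ 1 := by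
      simpa [Wsets_eq_one_iff habs] using ⟨b, hb, hab⟩
    simpa [insert_eq_of_mem hb] using hdef a (mem_sdiff.2 ⟨ha, haB⟩) hatt

omit [Fintype A] in
theorem wPreferredIn_iff_forall_disjoint {W : A → A → S} {U B : Finset A} :
    wPreferredIn W U B ↔
      wAdmissibleIn W U B ∧ ∀ D, Disjoint B D → wAdmissibleIn W U (B ∪ D) → D = ∅ := by
  refine and_congr_right fun _ => ⟨fun hmax D hBD hD => ?_, fun hmax C hC hBC => ?_⟩
  · have hDB : D ⊆ B := union_eq_left.1 (hmax _ hD subset_union_left)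
    exact disjoint_self_iff_empty D |>.1 (hBD.mono_left hDB).symm
  · have hCB : B ∪ (C \ B) = C := union_sdiff_of_subset hBC
    rw [← hCB, hmax (C \ B) disjoint_sdiff (by rwa [hCB]), union_empty]

/-- `W'` is the weight function of the reduced framework `F'`, on the arguments
`{z} ∪ (A \ Z)`. -/
structure IsContraction (W : A → A → S) (Z : Finset A) (z : A) (W' : A → A → S) : Prop where
  mem : z ∈ Z
  out : ∀ j ∉ Z, W' z j = ∏ i ∈ Z, W i j
  into : ∀ j ∉ Z, W' j z = ∏ i ∈ Z, W j i
  outside : ∀ j ∉ Z, ∀ j' ∉ Z, W' j j' = W j j'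
  self : W' z z = 1

namespace IsContraction

variable {W W' : A → A → S} {Z D E : Finset A} {z : A}

omit [Fintype A] [DecidableEq A] in
theorem Wsets_singleton_left (hc : IsContraction W Z z W') (hD : Disjoint Z D) :
    Wsets W' {z} D = Wsets W Z D := by
  rw [Wsets, prod_singleton, Wsets, prod_comm]
  exact prod_congr rfl fun d hd => hc.out d (disjoint_right.1 hD hd)

omit [Fintype A] [DecidableEq A] in
theorem Wsets_singleton_right (hc : IsContraction W Z z W') (hD : Disjoint Z D) :
    Wsets W' D {z} = Wsets W D Z := by
  simp only [Wsets, prod_singleton]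
  exact prod_congr rfl fun d hd => hc.into d (disjoint_right.1 hD hd)

omit [Fintype A] [DecidableEq A] in
theorem Wsets_of_disjoint (hc : IsContraction W Z z W') (hD : Disjoint Z D) (hE : Disjoint Z E) :
    Wsets W' D E = Wsets W D E :=
  prod_congr rfl fun d hd => prod_congr rfl fun e he =>
    hc.outside d (disjoint_right.1 hD hd) e (disjoint_right.1 hE he)

omit [Fintype A] [DecidableEq A] in
theorem disjoint_singleton (hc : IsContraction W Z z W') (hD : Disjoint Z D) :
    Disjoint {z} D :=
  hD.mono_left (singleton_subset_iff.2 hc.mem)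

omit [Fintype A] in
theorem Wsets_singleton_union_left (hc : IsContraction W Z z W') (hD : Disjoint Z D)
    (hE : Disjoint Z E) : Wsets W' ({z} ∪ D) E = Wsets W (Z ∪ D) E := by
  rw [Wsets_union_left _ (hc.disjoint_singleton hD), Wsets_union_left _ hD,
    hc.Wsets_singleton_left hE, hc.Wsets_of_disjoint hD hE]

omit [Fintype A] in
theorem Wsets_singleton_union_right (hc : IsContraction W Z z W') (hD : Disjoint Z D)
    (hE : Disjoint Z E) : Wsets W' D ({z} ∪ E) = Wsets W D (Z ∪ E) := by
  rw [Wsets_union_right _ _ (hc.disjoint_singleton hE), Wsets_union_right _ _ hE,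
    hc.Wsets_singleton_right hD, hc.Wsets_of_disjoint hD hE]

omit [Fintype A] in
theorem wConflictFree_singleton_union_iff (hc : IsContraction W Z z W')
    (hcf : wConflictFree W Z) (hD : Disjoint Z D) :
    wConflictFree W' ({z} ∪ D) ↔ wConflictFree W (Z ∪ D) := by
  have hzz : Wsets W' {z} {z} = Wsets W Z Z := by
    rw [Wsets_singleton_singleton, hc.self]
    exact hcf.symm
  unfold wConflictFree
  rw [Wsets_union_left _ (hc.disjoint_singleton hD), Wsets_union_left _ hD,
    Wsets_union_right _ _ (hc.disjoint_singleton hD), Wsets_union_right _ _ hD,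
    hzz, hc.Wsets_singleton_left hD, hc.Wsets_singleton_union_right hD hD]

theorem mem_sdiff_singleton_union_iff (hc : IsContraction W Z z W') {a : A} :
    a ∈ insert z (univ \ Z) \ ({z} ∪ D) ↔ a ∈ univ \ (Z ∪ D) := by
  have hz := hc.mem
  simp only [mem_sdiff, mem_insert, mem_univ, true_and, mem_union, mem_singleton, not_or]
  constructor
  · rintro ⟨rfl | haZ, haz, haD⟩
    exacts [absurd rfl haz, ⟨haZ, haD⟩]
  · rintro ⟨haZ, haD⟩
    exact ⟨Or.inr haZ, fun h => haZ (h ▸ hz), haD⟩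

theorem wAdmissibleIn_singleton_union_iff (habs : ∀ s t : S, s + s * t = s)
    (hc : IsContraction W Z z W') (hcf : wConflictFree W Z) (hD : Disjoint Z D) :
    wAdmissibleIn W' (insert z (univ \ Z)) ({z} ∪ D) ↔ wAdmissibleIn W univ (Z ∪ D) := by
  have hsub : {z} ∪ D ⊆ insert z (univ \ Z) := by
    rw [insert_eq]
    exact union_subset_union le_rfl (subset_sdiff.2 ⟨subset_univ D, hD.symm⟩)
  rw [wAdmissibleIn_iff habs, wAdmissibleIn_iff habs, hc.wConflictFree_singleton_union_iff hcf hD]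
  refine and_congr (iff_of_true hsub (subset_univ _)) (and_congr_right fun _ => ?_)
  refine forall_congr' fun a => ?_
  rw [hc.mem_sdiff_singleton_union_iff]
  refine forall_congr' fun ha => ?_
  have haZ : Disjoint Z {a} :=
    disjoint_singleton_right.2 fun h => (mem_sdiff.1 ha).2 (mem_union_left D h)
  rw [hc.Wsets_singleton_union_left hD haZ, hc.Wsets_singleton_union_right haZ hD]

end IsContraction

theorem contraction_preserves_preferred_general (W : A → A → S)
    (habs : ∀ s t : S, s + s * t = s)
    (Z : Finset A) (hcf : wConflictFree W Z) (z : A) (hz : z ∈ Z)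
    (W' : A → A → S)
    (hW'zj : ∀ j ∉ Z, W' z j = ∏ i ∈ Z, W i j)
    (hW'jz : ∀ j ∉ Z, W' j z = ∏ i ∈ Z, W j i)
    (hW'jj : ∀ j ∉ Z, ∀ j' ∉ Z, W' j j' = W j j')
    (hW'zz : W' z z = 1) :
    wPreferredIn W Finset.univ Z ↔
      wPreferredIn W' (insert z (Finset.univ \ Z)) {z} := by
  have hc : IsContraction W Z z W' := ⟨hz, hW'zj, hW'jz, hW'jj, hW'zz⟩
  have hadm := fun D (hD : Disjoint Z D) => hc.wAdmissibleIn_singleton_union_iff habs hcf hD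
  have hdisj : ∀ D, Disjoint {z} D → {z} ∪ D ⊆ insert z (univ \ Z) → Disjoint Z D :=
    fun D hzD hD => (subset_sdiff.1 ((subset_insert_iff_of_notMem
      (disjoint_singleton_left.1 hzD)).1 (subset_union_right.trans hD))).2.symm
  rw [wPreferredIn_iff_forall_disjoint, wPreferredIn_iff_forall_disjoint,
    ← union_empty {z}, hadm ∅ (disjoint_empty_right Z), union_empty]
  refine and_congr_right fun _ => ⟨fun h D hzD hD => ?_, fun h D hZD hD => ?_⟩
  · exact h D (hdisj D hzD hD.1) ((hadm D (hdisj D hzD hD.1)).1 hD)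
  · exact h D (hc.disjoint_singleton hZD) ((hadm D hZD).2 hD)

/-- Matrix reduction by contraction of a w-conflict-free set Z into a single
argument z ∈ Z: Z is a w-preferred extension in F iff {z} is a w-preferred extension in the reduced framework F',
whose argument set is {z} ∪ (A \ Z) and whose weights W' are obtained by
combining the rows and columns of Z. -/
theorem contraction_preserves_preferred (W : A → A → S)
    (hadd : ∀ s : S, s + s = s) (habs : ∀ s t : S, s + s * t = s)
    (Z : Finset A) (hcf : wConflictFree W Z) (z : A) (hz : z ∈ Z)
    (W' : A → A → S)
    (hW'zj : ∀ j ∉ Z, W' z j = ∏ i ∈ Z, W i j)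
    (hW'jz : ∀ j ∉ Z, W' j z = ∏ i ∈ Z, W j i)
    (hW'jj : ∀ j ∉ Z, ∀ j' ∉ Z, W' j j' = W j j')
    (hW'zz : W' z z = 1) :
    wPreferredIn W Finset.univ Z ↔
      wPreferredIn W' (insert z (Finset.univ \ Z)) {z} :=
  contraction_preserves_preferred_general W habs Z hcf z hz W' hW'zj hW'jz hW'jj hW'zz
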